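/- arXiv:2007.04112 — 3 statements merged into one kernel-verified Lean document; each statement's English description precedes it below -/
import Mathlib

section
/- In UT_3(F) with the involution A* = J·Aᵀ·J, for any elements x₁,...,x₆ each symmetric or skew-symmetric, the product of three commutators vanishes: [x₁,x₂][x₃,x₄][x₅,x₆] = 0. -/
open Matrix

/-- The anti-diagonal 3×3 permutation matrix `J`. -/
noncomputable def J3 (F : Type*) [Field F] : Matrix (Fin 3) (Fin 3) F :=
  Matrix.of fun i j => if (i : ℕ) + (j : ℕ) = 2 then 1 else 0

/-- The involution `A ↦ J·Aᵀ·J` on `UT₃(F)`. -/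
noncomputable def st3 {F : Type*} [Field F] (A : Matrix (Fin 3) (Fin 3) F) :
    Matrix (Fin 3) (Fin 3) F :=
  J3 F * Aᵀ * J3 F

/-- `A` is upper triangular. -/
def UT3 {F : Type*} [Field F] (A : Matrix (Fin 3) (Fin 3) F) : Prop :=
  ∀ i j : Fin 3, (j : ℕ) < (i : ℕ) → A i j = 0

/-- commutator -/
def cm {F : Type*} [Field F] (a b : Matrix (Fin 3) (Fin 3) F) : Matrix (Fin 3) (Fin 3) F :=
  a * b - b * a

/-- `x` is symmetric or skew-symmetric, with sign `e = (-1)^{|x|}`: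
`e = -1` if `x` is symmetric (`|x| = 1`), `e = 1` if `x` is skew-symmetric (`|x| = 0`). -/
def sgn3 {F : Type*} [Field F] (x : Matrix (Fin 3) (Fin 3) F) (e : F) : Prop :=
  (st3 x = x ∧ e = -1) ∨ (st3 x = -x ∧ e = 1)

lemma cm_strict {F : Type*} [Field F] (a b : Matrix (Fin 3) (Fin 3) F)
    (ha : UT3 a) (hb : UT3 b) : ∀ i j : Fin 3, (j : ℕ) ≤ (i : ℕ) → cm a b i j = 0 := by
  intro i j hij
  fin_cases i <;> fin_cases j <;> simp_all <;>
    simp [cm, Matrix.mul_apply, Fin.sum_univ_three,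
      ha 1 0 (by norm_num), ha 2 0 (by norm_num), ha 2 1 (by norm_num),
      hb 1 0 (by norm_num), hb 2 0 (by norm_num), hb 2 1 (by norm_num)] <;>
    ring

lemma prod3_strict {F : Type*} [Field F] (A B C : Matrix (Fin 3) (Fin 3) F)
    (hA : ∀ i j : Fin 3, (j : ℕ) ≤ (i : ℕ) → A i j = 0)
    (hB : ∀ i j : Fin 3, (j : ℕ) ≤ (i : ℕ) → B i j = 0)
    (hC : ∀ i j : Fin 3, (j : ℕ) ≤ (i : ℕ) → C i j = 0) : A * B * C = 0 := by
  ext i j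
  fin_cases i <;> fin_cases j <;>
    simp [Matrix.mul_apply, Fin.sum_univ_three,
      hA 0 0 (by norm_num), hA 1 0 (by norm_num), hA 1 1 (by norm_num),
      hA 2 0 (by norm_num), hA 2 1 (by norm_num), hA 2 2 (by norm_num),
      hB 0 0 (by norm_num), hB 1 0 (by norm_num), hB 1 1 (by norm_num),
      hB 2 0 (by norm_num), hB 2 1 (by norm_num), hB 2 2 (by norm_num),
      hC 0 0 (by norm_num), hC 1 0 (by norm_num), hC 1 1 (by norm_num),
      hC 2 0 (by norm_num), hC 2 1 (by norm_num), hC 2 2 (by norm_num)]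

theorem stmt7 (F : Type*) [Field F] (h2 : (2 : F) ≠ 0)
    (x1 x2 x3 x4 x5 x6 : Matrix (Fin 3) (Fin 3) F)
    (u1 : UT3 x1) (u2 : UT3 x2) (u3 : UT3 x3) (u4 : UT3 x4) (u5 : UT3 x5) (u6 : UT3 x6)
    (hs1 : st3 x1 = x1 ∨ st3 x1 = -x1) (hs2 : st3 x2 = x2 ∨ st3 x2 = -x2)
    (hs3 : st3 x3 = x3 ∨ st3 x3 = -x3) (hs4 : st3 x4 = x4 ∨ st3 x4 = -x4)
    (hs5 : st3 x5 = x5 ∨ st3 x5 = -x5) (hs6 : st3 x6 = x6 ∨ st3 x6 = -x6) :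
    cm x1 x2 * cm x3 x4 * cm x5 x6 = 0 :=
  prod3_strict _ _ _ (cm_strict x1 x2 u1 u2) (cm_strict x3 x4 u3 u4) (cm_strict x5 x6 u5 u6)
end

section
/- In UT_3(F) with the involution A* = J·Aᵀ·J, for skew-symmetric z₁, z₂, z₃ and symmetric y₄, the identity [z₁,z₂][z₃,y₄] + z₁[z₂,y₄]z₃ - z₂[z₁,y₄]z₃ = 0 holds. -/
open Matrix

lemma st3_apply {F : Type*} [Field F] (A : Matrix (Fin 3) (Fin 3) F) (i j : Fin 3) :
    st3 A i j = A (2 - j) (2 - i) := by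
  fin_cases i <;> fin_cases j <;>
    simp [st3, J3, Matrix.mul_apply, Fin.sum_univ_three]

lemma skew_rep {F : Type*} [Field F] (h2 : (2 : F) ≠ 0)
    (A : Matrix (Fin 3) (Fin 3) F) (u : UT3 A) (h : st3 A = -A) :
    A = !![A 0 0, A 0 1, 0; 0, 0, -(A 0 1); 0, 0, -(A 0 0)] := by
  have e : ∀ i j, A (2 - j) (2 - i) = -A i j := fun i j => by
    have := congrFun (congrFun h i) j
    rw [st3_apply] at this
    simpa using this
  have e02 := e 0 2
  have e11 := e 1 1
  have e01 := e 0 1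
  have e00 := e 0 0
  simp only [show ((2:Fin 3) - 2) = 0 from rfl, show ((2:Fin 3) - 0) = 2 from rfl,
    show ((2:Fin 3) - 1) = 1 from rfl] at e02 e11 e01 e00
  have h02 : A 0 2 = 0 := by
    have : (2:F) * A 0 2 = 0 := by linear_combination e02
    exact (mul_eq_zero.mp this).resolve_left h2
  have h11 : A 1 1 = 0 := by
    have : (2:F) * A 1 1 = 0 := by linear_combination e11
    exact (mul_eq_zero.mp this).resolve_left h2
  ext i j
  fin_cases i <;> fin_cases j <;>
    simp_all [u 1 0 (by norm_num), u 2 0 (by norm_num), u 2 1 (by norm_num), Matrix.vecHead, Matrix.vecTail]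

lemma symm_rep {F : Type*} [Field F]
    (A : Matrix (Fin 3) (Fin 3) F) (u : UT3 A) (h : st3 A = A) :
    A = !![A 0 0, A 0 1, A 0 2; 0, A 1 1, A 0 1; 0, 0, A 0 0] := by
  have e : ∀ i j, A (2 - j) (2 - i) = A i j := fun i j => by
    have := congrFun (congrFun h i) j
    rwa [st3_apply] at this
  have e01 := e 0 1
  have e00 := e 0 0
  simp only [show ((2:Fin 3) - 2) = 0 from rfl, show ((2:Fin 3) - 0) = 2 from rfl,
    show ((2:Fin 3) - 1) = 1 from rfl] at e01 e00
  ext i j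
  fin_cases i <;> fin_cases j <;>
    simp_all [u 1 0 (by norm_num), u 2 0 (by norm_num), u 2 1 (by norm_num), Matrix.vecHead, Matrix.vecTail]

set_option maxHeartbeats 1000000 in
theorem stmt11 (F : Type*) [Field F] (h2 : (2 : F) ≠ 0)
    (z1 z2 z3 y4 : Matrix (Fin 3) (Fin 3) F)
    (u1 : UT3 z1) (u2 : UT3 z2) (u3 : UT3 z3) (u4 : UT3 y4)
    (hz1 : st3 z1 = -z1) (hz2 : st3 z2 = -z2) (hz3 : st3 z3 = -z3)
    (hy4 : st3 y4 = y4) :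
    cm z1 z2 * cm z3 y4 + z1 * cm z2 y4 * z3 - z2 * cm z1 y4 * z3 = 0 := by
  obtain ⟨a1, b1, h1⟩ : ∃ a b, z1 = !![a, b, 0; 0, 0, -b; 0, 0, -a] :=
    ⟨_, _, skew_rep h2 z1 u1 hz1⟩
  obtain ⟨a2, b2, h2'⟩ : ∃ a b, z2 = !![a, b, 0; 0, 0, -b; 0, 0, -a] :=
    ⟨_, _, skew_rep h2 z2 u2 hz2⟩
  obtain ⟨a3, b3, h3⟩ : ∃ a b, z3 = !![a, b, 0; 0, 0, -b; 0, 0, -a] :=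
    ⟨_, _, skew_rep h2 z3 u3 hz3⟩
  obtain ⟨p, q, r, s, h4⟩ : ∃ p q r s, y4 = !![p, q, r; 0, s, q; 0, 0, p] :=
    ⟨_, _, _, _, symm_rep y4 u4 hy4⟩
  subst h1 h2' h3 h4
  show cm _ _ * cm _ _ + _ * cm _ _ * _ - _ * cm _ _ * _ = (0 : Matrix (Fin 3) (Fin 3) F)
  simp only [cm, Matrix.mul_fin_three]
  ext i j
  fin_cases i <;> fin_cases j <;>
    (simp [Matrix.mul_apply, Matrix.sub_apply, Matrix.add_apply, Fin.sum_univ_three] <;> ring)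
end

section
/- Let F be a field, and consider the matrices Z₁ = diag(1,0,-1) and Y_j = [[1, y₁₂^j, y₁₃^j],[0,0,y₁₂^j],[0,0,1]] over F[y_ij^j]. For even m ≥ 2 and n ≥ 2 skew factors, the iterated commutator [Y_{j₁}, Z₁,...,Z₁ (n times), Y_{j₂},...,Y_{j_m}] taken with all middle entries equal to Z₁ equals (-1)ⁿ(0 - y₁₂^{j₁})(e₁₂ - e₂₃) when all Z-entries are Z₁ (which has z₁₂ = 0); more generally with Z_l = [[1,z₁₂^l,0],[0,0,-z₁₂^l],[0,0,-1]], one has [Y_{j₁},Z_{i₁},...,Z_{i_n},Y_{j₂},...,Y_{j_m}] = (-1)ⁿ(z₁₂^{i₁} - y₁₂^{j₁})(e₁₂ - e₂₃) for m even, n ≥ 2. -/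
open Matrix MvPolynomial

/-- Left-normed iterated commutator `[[a, b₁], b₂, …]`. -/
def itComm {R : Type*} [Ring R] : R → List R → R
  | a, [] => a
  | a, b :: t => itComm (a * b - b * a) t

/-- The sgeneric skew matrix `Z_l` with rows `[1, z₁₂ˡ, 0], [0, 0, -z₁₂ˡ], [0, 0, -1]`;
variable `Sum.inl l ↦ z₁₂ˡ`. -/
noncomputable def Zs (F : Type*) [Field F] (l : ℕ) :
    Matrix (Fin 3) (Fin 3) (MvPolynomial (ℕ ⊕ ℕ × Fin 2) F) :=
  !![1, X (Sum.inl l), 0;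
     0, 0, -X (Sum.inl l);
     0, 0, -1]

/-- The sgeneric symmetric matrix `Y_j` with rows `[1, y₁₂ʲ, y₁₃ʲ], [0, 0, y₁₂ʲ],
[0, 0, 1]`; variables `Sum.inr (j, 0) ↦ y₁₂ʲ` and `Sum.inr (j, 1) ↦ y₁₃ʲ`. -/
noncomputable def Ys (F : Type*) [Field F] (j : ℕ) :
    Matrix (Fin 3) (Fin 3) (MvPolynomial (ℕ ⊕ ℕ × Fin 2) F) :=
  !![1, X (Sum.inr (j, 0)), X (Sum.inr (j, 1));
     0, 0, X (Sum.inr (j, 0));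
     0, 0, 1]

/-- Auxiliary "+"-form matrix `s(e₁₂+e₂₃) + t e₁₃`. -/
def Am {R : Type*} [CommRing R] (s t : R) : Matrix (Fin 3) (Fin 3) R :=
  !![0, s, t; 0, 0, s; 0, 0, 0]

/-- Auxiliary "−"-form matrix `s(e₁₂-e₂₃)`. -/
def Bm {R : Type*} [CommRing R] (s : R) : Matrix (Fin 3) (Fin 3) R :=
  !![0, s, 0; 0, 0, -s; 0, 0, 0]

section Aux
variable {F : Type*} [Field F]

lemma hYZ (j l : ℕ) :
    Ys F j * Zs F l - Zs F l * Ys F j =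
      Am (X (Sum.inl l) - X (Sum.inr (j, 0)))
        (-(2 * X (Sum.inl l) * X (Sum.inr (j, 0))) - 2 * X (Sum.inr (j, 1))) := by
  rw [Ys, Zs, Am, Matrix.mul_fin_three, Matrix.mul_fin_three]
  refine Matrix.ext fun a b => ?_
  fin_cases a <;> fin_cases b <;> simp [Matrix.vecHead, Matrix.vecTail] <;> ring

lemma hAZ (s t : MvPolynomial (ℕ ⊕ ℕ × Fin 2) F) (l : ℕ) :
    Am s t * Zs F l - Zs F l * Am s t =
      Am (-s) (-(2 * X (Sum.inl l) * s) - 2 * t) := by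
  rw [Zs, Am, Am, Matrix.mul_fin_three, Matrix.mul_fin_three]
  refine Matrix.ext fun a b => ?_
  fin_cases a <;> fin_cases b <;> simp [Matrix.vecHead, Matrix.vecTail] <;> ring

lemma hAY (s t : MvPolynomial (ℕ ⊕ ℕ × Fin 2) F) (j : ℕ) :
    Am s t * Ys F j - Ys F j * Am s t = Bm (-s) := by
  rw [Ys, Am, Bm, Matrix.mul_fin_three, Matrix.mul_fin_three]
  refine Matrix.ext fun a b => ?_
  fin_cases a <;> fin_cases b <;> simp [Matrix.vecHead, Matrix.vecTail] <;> ring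

lemma hBY (s : MvPolynomial (ℕ ⊕ ℕ × Fin 2) F) (j : ℕ) :
    Bm s * Ys F j - Ys F j * Bm s = Am (-s) (2 * X (Sum.inr (j, 0)) * s) := by
  rw [Ys, Am, Bm, Matrix.mul_fin_three, Matrix.mul_fin_three]
  refine Matrix.ext fun a b => ?_
  fin_cases a <;> fin_cases b <;> simp [Matrix.vecHead, Matrix.vecTail] <;> ring

lemma itComm_append {R : Type*} [Ring R] (a : R) (L1 L2 : List R) :
    itComm a (L1 ++ L2) = itComm (itComm a L1) L2 := by
  induction L1 generalizing a with
  | nil => rfl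
  | cons b t ih => simp [itComm, ih]

lemma Zchain : ∀ (n : ℕ) (i : Fin n → ℕ) (s t : MvPolynomial (ℕ ⊕ ℕ × Fin 2) F),
    ∃ t', itComm (Am s t) (List.ofFn fun k => Zs F (i k)) = Am ((-1) ^ n * s) t' := by
  intro n
  induction n with
  | zero => intro i s t; exact ⟨t, by simp [itComm, Am]⟩
  | succ n ih =>
    intro i s t
    rw [List.ofFn_succ]
    show ∃ t', itComm (Am s t * Zs F (i 0) - Zs F (i 0) * Am s t) _ = _
    rw [hAZ]
    obtain ⟨t', ht'⟩ := ih (fun k => i k.succ) (-s)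
      (-(2 * X (Sum.inl (i 0)) * s) - 2 * t)
    refine ⟨t', ?_⟩
    rw [ht', show ((-1 : MvPolynomial (ℕ ⊕ ℕ × Fin 2) F)) ^ n * -s =
      (-1) ^ (n + 1) * s by ring]

lemma Ychain : ∀ (k : ℕ) (js : List ℕ), js.length = 2 * k + 1 →
    ∀ s t : MvPolynomial (ℕ ⊕ ℕ × Fin 2) F,
      itComm (Am s t) (js.map (Ys F)) = Bm (-s) := by
  intro k
  induction k with
  | zero =>
    intro js h s t
    rcases js with _ | ⟨j, _ | ⟨j2, rest⟩⟩
    · simp at h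
    · show itComm (Am s t * Ys F j - Ys F j * Am s t) [] = Bm (-s)
      rw [hAY]; rfl
    · simp at h
  | succ k ih =>
    intro js h s t
    rcases js with _ | ⟨j1, _ | ⟨j2, rest⟩⟩
    · simp at h
    · simp at h
    · rw [List.map_cons, List.map_cons]; simp only [itComm]
      rw [hAY, hBY, ih rest (by simp at h; omega)]
      rw [neg_neg]


lemma Bm_smul (u : MvPolynomial (ℕ ⊕ ℕ × Fin 2) F) :
    Bm u = u • (single 0 1 1 - single 1 2 1 :
      Matrix (Fin 3) (Fin 3) (MvPolynomial (ℕ ⊕ ℕ × Fin 2) F)) := by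
  refine Matrix.ext fun a b => ?_
  fin_cases a <;> fin_cases b <;>
    simp [Bm, Matrix.single, Matrix.vecHead, Matrix.vecTail]

end Aux

/-- For `m` even, `m ≥ 2`, and `n ≥ 2`:
`[Y_{j₁}, Z_{i₁}, …, Z_{i_n}, Y_{j₂}, …, Y_{j_m}] = (-1)ⁿ(z₁₂^{i₁} - y₁₂^{j₁})(e₁₂ - e₂₃)`
(taking all middle `Z`-entries equal to `Z₁`, which has `z₁₂¹ = 0`, recovers
`(-1)ⁿ(0 - y₁₂^{j₁})(e₁₂ - e₂₃)`). -/
theorem stmt18 (F : Type*) [Field F] (m n : ℕ) (hm : 2 ≤ m) (hme : m % 2 = 0)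
    (hn : 2 ≤ n) (i : Fin n → ℕ) (j : Fin m → ℕ) :
    itComm (Ys F (j ⟨0, by omega⟩))
      ((List.ofFn fun t : Fin n => Zs F (i t)) ++
        (List.ofFn fun t : Fin (m - 1) => Ys F (j ⟨t.1 + 1, by omega⟩))) =
      ((-1 : MvPolynomial (ℕ ⊕ ℕ × Fin 2) F) ^ n *
          (X (Sum.inl (i ⟨0, by omega⟩)) - X (Sum.inr (j ⟨0, by omega⟩, 0)))) •
        (single 0 1 1 - single 1 2 1 :
          Matrix (Fin 3) (Fin 3) (MvPolynomial (ℕ ⊕ ℕ × Fin 2) F)) := by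
  obtain ⟨n', rfl⟩ : ∃ n', n = n' + 1 := ⟨n - 1, by omega⟩
  rw [itComm_append, List.ofFn_succ]
  show itComm (itComm (Ys F (j ⟨0, by omega⟩) * Zs F (i 0) -
      Zs F (i 0) * Ys F (j ⟨0, by omega⟩)) _) _ = _
  rw [hYZ]
  obtain ⟨t', ht'⟩ := Zchain (F := F) n' (fun k => i k.succ)
    (X (Sum.inl (i 0)) - X (Sum.inr (j ⟨0, by omega⟩, 0)))
    (-(2 * X (Sum.inl (i 0)) * X (Sum.inr (j ⟨0, by omega⟩, 0))) -
      2 * X (Sum.inr (j ⟨0, by omega⟩, 1)))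
  rw [ht']
  have hmap : (List.ofFn fun t : Fin (m - 1) => Ys F (j ⟨t.1 + 1, by omega⟩)) =
      (List.ofFn fun t : Fin (m - 1) => j ⟨t.1 + 1, by omega⟩).map (Ys F) := by
    rw [List.map_ofFn]; rfl
  rw [hmap, Ychain ((m - 2) / 2) _ (by simp; omega), Bm_smul]
  congr 1
  have : i (⟨0, by omega⟩ : Fin (n' + 1)) = i 0 := rfl
  rw [this]; ring
end
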